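/- arXiv:2105.06011 — 4 statements merged into one kernel-verified Lean document; each statement's English description precedes it below -/
import Mathlib

section
/- Let G' = (V,E') be the output of the ZF-based edge augmentation algorithm on a directed graph G with n nodes, leader set of size m, and derived set Δ. Then |E'| ≥ |Δ|(|Δ|+1)/2 − m(m+1)/2 + (m+n−|Δ|)n − n. -/
/-!
Let `k` be the length of the run, so that `|Δ| = m + k`. A node that has forced has no white
in-neighbour left, so it never forces again: the `k` forcing nodes are distinct. The step taken
with `b` black nodes adds `b` edges into its forcing node, and these edge sets are disjoint, so the
loop adds `C(|Δ|, 2) - C(m, 2)` edges. The `n - k` nodes that never force receive all `n - 1`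
possible in-edges, disjointly from the former. This count equals the stated bound exactly; the
original edges can only add to it.
-/

variable {V : Type*} [Fintype V] [DecidableEq V]

/-- The set of white (i.e., not in `B`) in-neighbors of `v` in the digraph with edge set `E`. -/
def whiteIn (E : Finset (V × V)) (B : Finset V) (v : V) : Finset V :=
  Finset.univ.filter (fun u => (u, v) ∈ E ∧ u ∉ B)

/-- Black node `u` forces the white node `v`: `v` is the unique white in-neighbor of `u`. -/
def Forces (E : Finset (V × V)) (B : Finset V) (u v : V) : Prop :=
  u ∈ B ∧ whiteIn E B u = {v}

/-- One step of the zero forcing process. -/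
def ZFStep (E : Finset (V × V)) (B B' : Finset V) : Prop :=
  ∃ u v, Forces E B u v ∧ B' = insert v B

/-- No further color change is possible. -/
def Stalled (E : Finset (V × V)) (B : Finset V) : Prop :=
  ∀ u v, ¬ Forces E B u v

/-- `B` is a derived set of input set `V'`: obtained from `V'` by zero forcing steps,
with no further step possible. -/
def IsDerived (E : Finset (V × V)) (V' B : Finset V) : Prop :=
  Relation.ReflTransGen (ZFStep E) V' B ∧ Stalled E B

/-- `ValidFrom E B L`: the list `L` of (forcing node, forced node) pairs is a valid
zero forcing run starting from black set `B`. -/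
def ValidFrom (E : Finset (V × V)) : Finset V → List (V × V) → Prop
  | _, [] => True
  | B, (u, v) :: rest => Forces E B u v ∧ ValidFrom E (insert v B) rest

/-- Black set at the end of the run `L` started from black set `B`. -/
def finalBlack : Finset V → List (V × V) → Finset V
  | B, [] => B
  | B, (_, v) :: rest => finalBlack (insert v B) rest

/-- Edges added inside the loop of the ZF-based augmentation algorithm: each time `u`
forces `v`, after coloring `v` black, add edges to `u` from all currently black nodes. -/
def augEdges : Finset V → List (V × V) → Finset (V × V)
  | _, [] => (∅ : Finset (V × V))
  | B, (u, v) :: rest =>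
      ((insert v B).erase u).image (fun w => (w, u)) ∪ augEdges (insert v B) rest

/-- The edge set returned by the ZF-based edge augmentation algorithm: the original edges,
the edges added during the forcing loop, and all incoming edges to every node that was never
used as a forcing node. -/
def zfAugment (E : Finset (V × V)) (Vl : Finset V) (L : List (V × V)) : Finset (V × V) :=
  E ∪ augEdges Vl L ∪
    Finset.univ.filter (fun p : V × V => p.1 ≠ p.2 ∧ p.2 ∉ (L.map Prod.fst).toFinset)

theorem whiteIn_anti {E : Finset (V × V)} {B B' : Finset V} (h : B ⊆ B') (u : V) :
    whiteIn E B' u ⊆ whiteIn E B u := by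
  intro x hx
  simp only [whiteIn, Finset.mem_filter, Finset.mem_univ, true_and] at hx ⊢
  exact ⟨hx.1, fun hb => hx.2 (h hb)⟩

namespace Forces

variable {E : Finset (V × V)} {B : Finset V} {u v : V}

theorem notMem_right (hf : Forces E B u v) : v ∉ B := by
  have hv : v ∈ whiteIn E B u := hf.2 ▸ Finset.mem_singleton_self v
  exact (Finset.mem_filter.mp hv).2.2

theorem whiteIn_insert_eq_empty (hf : Forces E B u v) : whiteIn E (insert v B) u = ∅ := by
  refine Finset.eq_empty_of_forall_notMem fun x hx => ?_
  have hxv : x = v :=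
    Finset.mem_singleton.mp (hf.2 ▸ whiteIn_anti (Finset.subset_insert v B) u hx)
  subst hxv
  simp [whiteIn] at hx

end Forces

theorem snd_mem_map_fst_of_mem_augEdges {α : Type*} [DecidableEq α] {B : Finset α}
    {L : List (α × α)} {p : α × α} (hp : p ∈ augEdges B L) : p.2 ∈ L.map Prod.fst := by
  induction L generalizing B with
  | nil => simp [augEdges] at hp
  | cons q rest ih =>
    rw [augEdges, Finset.mem_union, Finset.mem_image] at hp
    rw [List.map_cons, List.mem_cons]
    rcases hp with ⟨w, -, rfl⟩ | hp
    · exact Or.inl rfl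
    · exact Or.inr (ih hp)

namespace ValidFrom

variable {E : Finset (V × V)} {B : Finset V} {L : List (V × V)}

theorem notMem_map_fst_of_whiteIn_eq_empty {u : V} (hL : ValidFrom E B L)
    (hu : whiteIn E B u = ∅) : u ∉ L.map Prod.fst := by
  induction L generalizing B with
  | nil => simp
  | cons p rest ih =>
    obtain ⟨⟨-, hw⟩, hrest⟩ := hL
    rw [List.map_cons, List.mem_cons, not_or]
    refine ⟨?_, ih hrest ?_⟩
    · rintro rfl
      exact Finset.singleton_ne_empty _ (hw.symm.trans hu)
    · exact Finset.subset_empty.mp (hu ▸ whiteIn_anti (Finset.subset_insert _ B) u)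

theorem nodup_map_fst (hL : ValidFrom E B L) : (L.map Prod.fst).Nodup := by
  induction L generalizing B with
  | nil => simp
  | cons p rest ih =>
    obtain ⟨hf, hrest⟩ := hL
    exact List.nodup_cons.mpr
      ⟨hrest.notMem_map_fst_of_whiteIn_eq_empty hf.whiteIn_insert_eq_empty, ih hrest⟩

theorem card_finalBlack (hL : ValidFrom E B L) : (finalBlack B L).card = B.card + L.length := by
  induction L generalizing B with
  | nil => simp [finalBlack]
  | cons p rest ih =>
    obtain ⟨hf, hrest⟩ := hL
    rw [finalBlack, ih hrest, Finset.card_insert_of_notMem hf.notMem_right, List.length_cons]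
    omega

theorem card_augEdges_add_choose_two (hL : ValidFrom E B L) :
    (augEdges B L).card + B.card.choose 2 = (finalBlack B L).card.choose 2 := by
  induction L generalizing B with
  | nil => simp [augEdges, finalBlack]
  | cons q rest ih =>
    obtain ⟨u, v⟩ := q
    obtain ⟨hf, hrest⟩ := hL
    have hdisj : Disjoint (((insert v B).erase u).image (·, u)) (augEdges (insert v B) rest) := by
      refine Finset.disjoint_left.mpr fun p hp hp' => ?_
      obtain ⟨w, -, rfl⟩ := Finset.mem_image.mp hp
      exact hrest.notMem_map_fst_of_whiteIn_eq_empty hf.whiteIn_insert_eq_empty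
        (snd_mem_map_fst_of_mem_augEdges hp')
    have hstep : (((insert v B).erase u).image (·, u)).card = B.card := by
      rw [Finset.card_image_of_injective _ fun a b hab => (Prod.ext_iff.mp hab).1,
        Finset.card_erase_of_mem (Finset.mem_insert_of_mem hf.1),
        Finset.card_insert_of_notMem hf.notMem_right, Nat.add_sub_cancel]
    rw [augEdges, finalBlack, Finset.card_union_of_disjoint hdisj, hstep, ← ih hrest,
      Finset.card_insert_of_notMem hf.notMem_right, Nat.choose_succ_succ', Nat.choose_one_right]
    ring

end ValidFrom

/-- The `#Sᶜ` pairs missing from `univ ×ˢ Sᶜ` are the loops `(b, b)`. -/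
theorem card_filter_ne_and_snd_notMem_add (S : Finset V) :
    (Finset.univ.filter fun p : V × V => p.1 ≠ p.2 ∧ p.2 ∉ S).card + Sᶜ.card
      = Fintype.card V * Sᶜ.card := by
  have hoff : (Finset.univ.filter fun p : V × V => p.1 ≠ p.2 ∧ p.2 ∉ S)
      = (Finset.univ ×ˢ Sᶜ).filter fun p => p.1 ≠ p.2 := by
    ext p; simp [and_comm]
  have hdiag : ((Finset.univ ×ˢ Sᶜ).filter fun p : V × V => ¬ p.1 ≠ p.2)
      = Sᶜ.image fun b => (b, b) := by
    ext ⟨a, b⟩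
    simp only [Finset.mem_filter, Finset.mem_product, Finset.mem_image]
    aesop
  calc _ = ((Finset.univ ×ˢ Sᶜ).filter fun p : V × V => p.1 ≠ p.2).card
        + ((Finset.univ ×ˢ Sᶜ).filter fun p : V × V => ¬ p.1 ≠ p.2).card := by
        rw [hoff, hdiag, Finset.card_image_of_injective _ fun a b hab => (Prod.ext_iff.mp hab).1]
    _ = Fintype.card V * Sᶜ.card := by
        rw [Finset.card_filter_add_card_filter_not, Finset.card_product, Finset.card_univ]

theorem card_augEdges_add_card_filter_le_card_zfAugment (E : Finset (V × V)) (Vl : Finset V)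
    (L : List (V × V)) :
    (augEdges Vl L).card
        + (Finset.univ.filter fun p : V × V =>
            p.1 ≠ p.2 ∧ p.2 ∉ (L.map Prod.fst).toFinset).card
      ≤ (zfAugment E Vl L).card := by
  rw [← Finset.card_union_of_disjoint]
  · refine Finset.card_le_card fun p hp => ?_
    rw [zfAugment, Finset.union_assoc]
    exact Finset.mem_union_right E hp
  · refine Finset.disjoint_left.mpr fun p hp hp' => (Finset.mem_filter.mp hp').2.2 ?_
    exact List.mem_toFinset.mpr (snd_mem_map_fst_of_mem_augEdges hp)

theorem natCast_mul_add_one_div_two (d : ℕ) :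
    (d : ℤ) * (d + 1) / 2 = ((d.choose 2 + d : ℕ) : ℤ) := by
  have hsucc : (d + 1).choose 2 = d.choose 2 + d := by
    rw [Nat.choose_succ_succ', Nat.choose_one_right, add_comm]
  rw [← hsucc, Nat.choose_two_right, Nat.add_sub_cancel, mul_comm]
  push_cast
  rfl

theorem zfAugment_card_lower_bound_general (E : Finset (V × V)) (Vl : Finset V) (L : List (V × V))
    (hvalid : ValidFrom E Vl L) :
    let n : ℤ := Fintype.card V
    let m : ℤ := Vl.card
    let D : ℤ := (finalBlack Vl L).card
    ((zfAugment E Vl L).card : ℤ) ≥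
      D * (D + 1) / 2 - m * (m + 1) / 2 + (m + n - D) * n - n := by
  intro n m D
  set S := (L.map Prod.fst).toFinset
  have hD := hvalid.card_finalBlack
  have hSc : (Sᶜ.card : ℤ) = n - L.length := by
    have hS : S.card = L.length := by
      rw [List.toFinset_card_of_nodup hvalid.nodup_map_fst, List.length_map]
    have hDle := (finalBlack Vl L).card_le_univ
    rw [Finset.card_compl, hS]
    omega
  have hA := hvalid.card_augEdges_add_choose_two
  have hF := card_filter_ne_and_snd_notMem_add S
  have hle := card_augEdges_add_card_filter_le_card_zfAugment E Vl L
  simp only [n, m, D] at *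
  rw [natCast_mul_add_one_div_two, natCast_mul_add_one_div_two]
  zify at hA hF hle
  rw [hSc] at hF
  push_cast [hD] at *
  linarith

/-- Lower bound on the number of edges returned by the ZF-based augmentation algorithm. -/
theorem zfAugment_card_lower_bound (E : Finset (V × V)) (Vl : Finset V) (L : List (V × V))
    (hvalid : ValidFrom E Vl L) (hstall : Stalled E (finalBlack Vl L)) :
    let n : ℤ := Fintype.card V
    let m : ℤ := Vl.card
    let D : ℤ := (finalBlack Vl L).card
    ((zfAugment E Vl L).card : ℤ) ≥
      D * (D + 1) / 2 - m * (m + 1) / 2 + (m + n - D) * n - n :=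
  zfAugment_card_lower_bound_general E Vl L hvalid
end

section
/- Let G = (V,E) be a directed graph on n nodes with leader set V_ℓ of size m and derived set Δ. Any directed graph G* = (V,E*) with E ⊆ E* whose derived set with input V_ℓ has the same size |Δ| satisfies |E*| ≤ n² − n − (n−m−1)(n−m)/2 + (n−|Δ|)(n−|Δ|−1)/2. -/
/-!
Each vertex forces at most once, since afterwards it has no white in-neighbour. When a vertex
`u` forces while `k` vertices are black, all its in-neighbours lie among those `k` vertices
and the forced one, so (having no self-loop) `u` has in-degree at most `k`. Reaching a derived
set of size `D` from `m` leaders takes `D - m` forcing steps, made at `k = m, …, D - 1`; the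
remaining `n - (D - m)` vertices have in-degree at most `n - 1`. Summing in-degrees gives
`|E*| ≤ (m + ⋯ + (D - 1)) + (n - D + m)(n - 1)`, which is the stated bound.
-/

variable {V : Type*} [Fintype V] [DecidableEq V]

open Finset Relation

section ZeroForcing

variable {E : Finset (V × V)} {B V' : Finset V} {u v : V}

def inDeg (E : Finset (V × V)) (v : V) : ℕ :=
  #(E.filter (·.2 = v))

lemma card_eq_sum_inDeg (E : Finset (V × V)) : #E = ∑ v, inDeg E v :=
  card_eq_sum_card_fiberwise fun p _ => mem_univ p.2

omit [Fintype V] in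
lemma inDeg_le_card_erase {S : Finset V} (hv : (v, v) ∉ E) (hS : ∀ w, (w, v) ∈ E → w ∈ S) :
    inDeg E v ≤ #(S.erase v) := by
  refine card_le_card_of_injOn Prod.fst (fun ⟨w, v'⟩ hp => ?_) (fun p hp q hq hpq => ?_)
  · obtain ⟨hpE, rfl⟩ := mem_filter.mp hp
    exact mem_erase.mpr ⟨by rintro (rfl : w = v'); exact hv hpE, hS w hpE⟩
  · exact Prod.ext hpq ((mem_filter.mp hp).2.trans (mem_filter.mp hq).2.symm)

lemma inDeg_add_one_le_card (hv : (v, v) ∉ E) : inDeg E v + 1 ≤ Fintype.card V := by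
  have := inDeg_le_card_erase (S := univ) hv fun w _ => mem_univ w
  rwa [← Nat.add_le_add_iff_right (n := 1), card_erase_add_one (mem_univ v), card_univ] at this

lemma Forces.mem_whiteIn (h : Forces E B u v) : v ∈ whiteIn E B u :=
  h.2 ▸ mem_singleton_self v

lemma Forces.edge_mem (h : Forces E B u v) : (v, u) ∈ E :=
  (mem_filter.mp h.mem_whiteIn).2.1

lemma Forces.notMem (h : Forces E B u v) : v ∉ B :=
  (mem_filter.mp h.mem_whiteIn).2.2

lemma Forces.mem_insert_of_edge (h : Forces E B u v) {w : V} (hw : (w, u) ∈ E) :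
    w ∈ insert v B := by
  by_cases hwB : w ∈ B
  · exact mem_insert_of_mem hwB
  · have : w ∈ whiteIn E B u := mem_filter.mpr ⟨mem_univ w, hw, hwB⟩
    rw [h.2, mem_singleton] at this
    exact this ▸ mem_insert_self w B

lemma Forces.inDeg_le_card (hloop : ∀ v, (v, v) ∉ E) (h : Forces E B u v) :
    inDeg E u ≤ #B := by
  have hle := inDeg_le_card_erase (hloop u) fun w hw => h.mem_insert_of_edge hw
  rwa [card_erase_of_mem (mem_insert_of_mem h.1), card_insert_of_notMem h.notMem,
    Nat.add_sub_cancel] at hle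

lemma subset_of_reflTransGen_zfStep (h : ReflTransGen (ZFStep E) V' B) : V' ⊆ B := by
  induction h with
  | refl => exact Subset.rfl
  | tail _ hstep ih =>
    obtain ⟨u, v, -, rfl⟩ := hstep
    exact ih.trans (subset_insert v _)

/-- `F` is the set of vertices that have forced so far. -/
lemma exists_forcers_of_reflTransGen_zfStep (hloop : ∀ v, (v, v) ∉ E)
    (h : ReflTransGen (ZFStep E) V' B) :
    ∃ F : Finset V, #F + #V' = #B ∧ (∀ u ∈ F, ∀ w, (w, u) ∈ E → w ∈ B) ∧
      ∑ u ∈ F, inDeg E u ≤ ∑ j ∈ Ico #V' #B, j := by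
  induction h with
  | refl => exact ⟨∅, by simp, by simp, by simp⟩
  | @tail B _ _ hstep ih =>
    obtain ⟨u, v, hforce, rfl⟩ := hstep
    obtain ⟨F, hcard, hblack, hsum⟩ := ih
    have hvB := hforce.notMem
    have huF : u ∉ F := fun hu => hvB (hblack u hu v hforce.edge_mem)
    refine ⟨insert u F, ?_, ?_, ?_⟩
    · rw [card_insert_of_notMem huF, card_insert_of_notMem hvB]
      omega
    · intro u' hu' w hw
      rcases mem_insert.mp hu' with rfl | hu'
      · exact hforce.mem_insert_of_edge hw
      · exact mem_insert_of_mem (hblack u' hu' w hw)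
    · rw [sum_insert huF, card_insert_of_notMem hvB, sum_Ico_succ_top (by omega), add_comm]
      exact add_le_add hsum (hforce.inDeg_le_card hloop)

lemma card_le_of_reflTransGen_zfStep (hloop : ∀ v, (v, v) ∉ E)
    (h : ReflTransGen (ZFStep E) V' B) :
    (#E : ℤ) ≤ ∑ j ∈ Ico #V' #B, (j : ℤ) +
      ((Fintype.card V : ℤ) - (#B - #V')) * (Fintype.card V - 1) := by
  obtain ⟨F, hcard, -, hsum⟩ := exists_forcers_of_reflTransGen_zfStep hloop h
  have hcompl : ∑ v ∈ Fᶜ, (inDeg E v : ℤ) ≤ #Fᶜ * ((Fintype.card V : ℤ) - 1) := by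
    rw [← nsmul_eq_mul]
    refine sum_le_card_nsmul _ _ _ fun v _ => ?_
    have := inDeg_add_one_le_card (hloop v)
    omega
  have hFc : (#Fᶜ : ℤ) = Fintype.card V - #F := by
    rw [card_compl, Nat.cast_sub (card_le_univ F)]
  rw [card_eq_sum_inDeg, Nat.cast_sum, ← sum_add_sum_compl F]
  have hF : (#F : ℤ) = #B - #V' := by omega
  have hsumℤ : ∑ u ∈ F, (inDeg E u : ℤ) ≤ ∑ j ∈ Ico #V' #B, (j : ℤ) := by
    rw [← Nat.cast_sum, ← Nat.cast_sum]
    exact_mod_cast hsum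
  rw [hFc, hF] at hcompl
  linarith

end ZeroForcing

lemma two_mul_sum_Ico_id {m D : ℕ} (h : m ≤ D) :
    2 * ∑ j ∈ Ico m D, (j : ℤ) = D * (D - 1) - m * (m - 1) := by
  induction D, h using Nat.le_induction with
  | base => simp
  | succ D hD ih =>
    rw [sum_Ico_succ_top hD, mul_add, ih]
    push_cast
    ring

theorem derived_preserving_card_upper_bound_general (Estar : Finset (V × V))
    (Vl Δ Δs : Finset V)
    (hloop : ∀ v : V, (v, v) ∉ Estar)
    (hDs : IsDerived Estar Vl Δs)
    (hcard : Δs.card = Δ.card) :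
    let n : ℤ := Fintype.card V
    let m : ℤ := Vl.card
    let D : ℤ := Δ.card
    (Estar.card : ℤ) ≤
      n ^ 2 - n - (n - m - 1) * (n - m) / 2 + (n - D) * (n - D - 1) / 2 := by
  intro n m D
  have hE := card_le_of_reflTransGen_zfStep hloop hDs.1
  have hsum := two_mul_sum_Ico_id (card_le_card (subset_of_reflTransGen_zfStep hDs.1))
  rw [hcard] at hE hsum
  have hm : 2 * ((n - m - 1) * (n - m) / 2) = (n - m - 1) * (n - m) :=
    Int.mul_ediv_cancel' (mul_comm (n - m) _ ▸ Int.even_mul_pred_self (n - m)).two_dvd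
  have hD : 2 * ((n - D) * (n - D - 1) / 2) = (n - D) * (n - D - 1) :=
    Int.mul_ediv_cancel' (Int.even_mul_pred_self (n - D)).two_dvd
  linarith

/-- Upper bound on the number of edges of any supergraph preserving the size of the
derived set. -/
theorem derived_preserving_card_upper_bound (E Estar : Finset (V × V))
    (Vl Δ Δs : Finset V)
    (hloop : ∀ v : V, (v, v) ∉ Estar) (hsub : E ⊆ Estar)
    (hD : IsDerived E Vl Δ) (hDs : IsDerived Estar Vl Δs)
    (hcard : Δs.card = Δ.card) :
    let n : ℤ := Fintype.card V
    let m : ℤ := Vl.card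
    let D : ℤ := Δ.card
    (Estar.card : ℤ) ≤
      n ^ 2 - n - (n - m - 1) * (n - m) / 2 + (n - D) * (n - D - 1) / 2 :=
  derived_preserving_card_upper_bound_general Estar Vl Δ Δs hloop hDs hcard
end

section
/- If an input set V' of a directed graph G is a zero forcing set (i.e., dset(G,V') = V), and G' is obtained from G by the ZF-based edge augmentation algorithm, then V' is also a zero forcing set of G'. -/
variable {V : Type*} [Fintype V] [DecidableEq V]

set_option linter.unusedSectionVars false

lemma whiteIn_union (E F : Finset (V × V)) (B : Finset V) (u : V) :
    whiteIn (E ∪ F) B u = whiteIn E B u ∪ whiteIn F B u := by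
  ext w; simp [whiteIn]; tauto

lemma whiteIn_mono {B B' : Finset V} (h : B ⊆ B') (E : Finset (V × V)) (u : V) :
    whiteIn E B' u ⊆ whiteIn E B u := by
  intro w hw
  simp only [whiteIn, Finset.mem_filter] at *
  exact ⟨hw.1, hw.2.1, fun hb => hw.2.2 (h hb)⟩

lemma augEdges_snd_mem {B : Finset V} {L : List (V × V)} {w t : V}
    (h : (w, t) ∈ augEdges B L) : t ∈ L.map Prod.fst := by
  induction L generalizing B with
  | nil => simp [augEdges] at h
  | cons p rest ih =>
    obtain ⟨u, v⟩ := p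
    simp only [augEdges, Finset.mem_union, Finset.mem_image] at h
    rcases h with ⟨w', _, hw'⟩ | h
    · simp [Prod.ext_iff] at hw'; simp [hw'.2]
    · simp [ih h]

lemma not_forces_of_superset {E : Finset (V × V)} {B : Finset V} {u v : V}
    (hwhite : whiteIn E B u ⊆ {v}) :
    ∀ {L : List (V × V)} {C : Finset V}, B ⊆ C → v ∈ C → ValidFrom E C L →
      u ∉ L.map Prod.fst := by
  intro L
  induction L with
  | nil => simp
  | cons p rest ih =>
    obtain ⟨u', v'⟩ := p
    intro C hBC hvC hval
    obtain ⟨⟨_, hw⟩, hrest⟩ := hval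
    simp only [List.map_cons, List.mem_cons, not_or]
    constructor
    · rintro rfl
      have h1 : whiteIn E C u ⊆ {v} := (whiteIn_mono hBC E u).trans hwhite
      have h2 : v ∉ whiteIn E C u := by simp [whiteIn, hvC]
      have : v' ∈ whiteIn E C u := by rw [hw]; simp
      have := h1 this
      simp only [Finset.mem_singleton] at this
      exact h2 (this ▸ ‹v' ∈ whiteIn E C u›)
    · exact ih (hBC.trans (Finset.subset_insert _ _))
        (Finset.mem_insert_of_mem hvC) hrest

lemma validFrom_nodup {E : Finset (V × V)} :
    ∀ {L : List (V × V)} {B : Finset V}, ValidFrom E B L → (L.map Prod.fst).Nodup := by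
  intro L
  induction L with
  | nil => simp
  | cons p rest ih =>
    obtain ⟨u, v⟩ := p
    intro B h
    obtain ⟨⟨hu, hw⟩, hrest⟩ := h
    simp only [List.map_cons, List.nodup_cons]
    exact ⟨not_forces_of_superset (hw ▸ Finset.Subset.refl _)
        (Finset.subset_insert _ _) (Finset.mem_insert_self _ _) hrest, ih hrest⟩

lemma validFrom_aug (E G : Finset (V × V)) :
    ∀ (L : List (V × V)) (B : Finset V), ValidFrom E B L → (L.map Prod.fst).Nodup →
      (∀ w t, (w, t) ∈ G → t ∈ L.map Prod.fst → (w, t) ∈ augEdges B L ∨ w ∈ B) →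
      ValidFrom (E ∪ G) B L := by
  intro L
  induction L with
  | nil => intro B _ _ _; trivial
  | cons p rest ih =>
    obtain ⟨u, v⟩ := p
    intro B hval hnd hG
    obtain ⟨⟨huB, hw⟩, hrest⟩ := hval
    simp only [List.map_cons, List.nodup_cons] at hnd
    obtain ⟨hunotin, hndrest⟩ := hnd
    refine ⟨⟨huB, ?_⟩, ?_⟩
    · rw [whiteIn_union, hw]
      have hsub : whiteIn G B u ⊆ {v} := by
        intro w hw'
        simp only [whiteIn, Finset.mem_filter] at hw'
        obtain ⟨-, hwG, hwB⟩ := hw'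
        have := hG w u hwG (by simp)
        rcases this with h | h
        · simp only [augEdges, Finset.mem_union, Finset.mem_image] at h
          rcases h with ⟨w', hw', heq⟩ | h
          · simp only [Prod.mk.injEq] at heq
            obtain ⟨rfl, -⟩ := heq
            have := Finset.mem_of_mem_erase hw'
            simp only [Finset.mem_insert] at this
            rcases this with rfl | h
            · simp
            · exact absurd h hwB
          · exact absurd (augEdges_snd_mem h) hunotin
        · exact absurd h hwB
      rw [Finset.union_eq_left.mpr hsub]
    · refine ih (insert v B) hrest hndrest ?_
      intro w t hwG ht
      have := hG w t hwG (by simp [ht])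
      rcases this with h | h
      · simp only [augEdges, Finset.mem_union, Finset.mem_image] at h
        rcases h with ⟨w', -, heq⟩ | h
        · simp only [Prod.mk.injEq] at heq
          exact absurd (heq.2 ▸ ht) hunotin
        · exact Or.inl h
      · exact Or.inr (Finset.mem_insert_of_mem h)

lemma validFrom_rtg (E : Finset (V × V)) :
    ∀ (L : List (V × V)) (B : Finset V), ValidFrom E B L →
      Relation.ReflTransGen (ZFStep E) B (finalBlack B L) := by
  intro L
  induction L with
  | nil => intro B _; exact Relation.ReflTransGen.refl
  | cons p rest ih =>
    obtain ⟨u, v⟩ := p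
    intro B h
    exact Relation.ReflTransGen.head ⟨u, v, h.1, rfl⟩ (ih _ h.2)

lemma stalled_univ (E : Finset (V × V)) : Stalled E (Finset.univ : Finset V) := by
  intro u v ⟨_, hw⟩
  have : v ∈ whiteIn E Finset.univ u := by rw [hw]; simp
  simp [whiteIn] at this

/-- If `V'` is a zero forcing set of `G`, then it is also a zero forcing set of the
graph returned by the ZF-based edge augmentation algorithm. -/
theorem zfAugment_preserves_ZFS (E : Finset (V × V)) (V' : Finset V) (L : List (V × V))
    (hvalid : ValidFrom E V' L) (hall : finalBlack V' L = (Finset.univ : Finset V)) :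
    IsDerived (zfAugment E V' L) V' (Finset.univ : Finset V) := by
  have hnd := validFrom_nodup hvalid
  set G := augEdges V' L ∪
      Finset.univ.filter (fun p : V × V => p.1 ≠ p.2 ∧ p.2 ∉ (L.map Prod.fst).toFinset) with hGdef
  have hE' : zfAugment E V' L = E ∪ G := by rw [zfAugment, Finset.union_assoc, hGdef]
  have hcond : ∀ w t, (w, t) ∈ G → t ∈ L.map Prod.fst → (w, t) ∈ augEdges V' L ∨ w ∈ V' := by
    intro w t hwt ht
    rcases Finset.mem_union.mp hwt with h | h
    · exact Or.inl h
    · simp only [Finset.mem_filter, List.mem_toFinset] at h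
      exact absurd ht h.2.2
  have hv' : ValidFrom (E ∪ G) V' L := validFrom_aug E G L V' hvalid hnd hcond
  rw [hE']
  constructor
  · have := validFrom_rtg (E ∪ G) L V' hv'
    rwa [hall] at this
  · exact stalled_univ _
end

section
/- Let G' = (V,E') be a directed graph, a,b ∈ V with d_{G'}(a,b) = k, and suppose every vertex v satisfies d_{G'}(a,v) + d_{G'}(v,b) = k. If u,v are vertices with d_{G'}(a,u) ≥ d_{G'}(a,v) − 1, then the graph H = (V, E' ∪ {(u,v)}) still satisfies d_H(a,b) = k. -/
variable {V : Type*} [Fintype V] [DecidableEq V]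

/-- There is a directed walk of length exactly `n` from `u` to `v`. -/
def ReachIn (E : Finset (V × V)) : ℕ → V → V → Prop
  | 0, u, v => u = v
  | n + 1, u, v => ∃ w, (u, w) ∈ E ∧ ReachIn E n w v

/-- Directed shortest-path distance (`⊤` = `∞` if there is no directed path). -/
noncomputable def ddist (E : Finset (V × V)) (u v : V) : ℕ∞ :=
  ⨅ (n : ℕ) (_ : ReachIn E n u v), (n : ℕ∞)

/-!
Adding `(u, v)` keeps `x ↦ d(a, x)` a potential that grows by at most one along every edge, which
is exactly the hypothesis `d(a, v) ≤ d(a, u) + 1`. Along any walk from `a` to `b` such a potential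
grows by at most the length of the walk, so no walk in the new graph is shorter than `d(a, b)`.
-/

section

variable {α : Type*} {E F : Finset (α × α)}

namespace ReachIn

theorem mono (hEF : E ⊆ F) : ∀ {n : ℕ} {x y : α}, ReachIn E n x y → ReachIn F n x y
  | 0, _, _, h => h
  | _ + 1, _, _, ⟨w, hw, h⟩ => ⟨w, hEF hw, mono hEF h⟩

theorem snoc : ∀ {n : ℕ} {x w y : α}, ReachIn E n x w → (w, y) ∈ E → ReachIn E (n + 1) x y
  | 0, _, _, _, rfl, he => ⟨_, he, rfl⟩
  | _ + 1, _, _, _, ⟨z, hz, h⟩, he => ⟨z, hz, snoc h he⟩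

theorem le_add_of_forall_mem_le_add_one {f : α → ℕ∞}
    (hf : ∀ x y, (x, y) ∈ E → f y ≤ f x + 1) :
    ∀ {n : ℕ} {x y : α}, ReachIn E n x y → f y ≤ f x + n
  | 0, _, _, rfl => by simp
  | n + 1, x, y, ⟨w, hw, h⟩ =>
    calc f y ≤ f w + n := le_add_of_forall_mem_le_add_one hf h
      _ ≤ f x + 1 + n := by gcongr; exact hf x w hw
      _ = f x + (n + 1 : ℕ) := by push_cast; ring

end ReachIn

theorem ddist_le_of_reachIn {n : ℕ} {x y : α} (h : ReachIn E n x y) : ddist E x y ≤ n :=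
  iInf₂_le n h

@[simp]
theorem ddist_self (x : α) : ddist E x x = 0 :=
  nonpos_iff_eq_zero.1 (ddist_le_of_reachIn (n := 0) rfl)

theorem ddist_anti (hEF : E ⊆ F) (x y : α) : ddist F x y ≤ ddist E x y :=
  le_iInf₂ fun _ h => ddist_le_of_reachIn (h.mono hEF)

theorem le_add_ddist_of_forall_mem_le_add_one {f : α → ℕ∞}
    (hf : ∀ x y, (x, y) ∈ E → f y ≤ f x + 1) (x y : α) : f y ≤ f x + ddist E x y := by
  rw [ddist, ENat.add_iInf₂]
  exact le_iInf₂ fun _ h => h.le_add_of_forall_mem_le_add_one hf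

theorem ddist_le_ddist_add_one_of_mem {x y : α} (a : α) (he : (x, y) ∈ E) :
    ddist E a y ≤ ddist E a x + 1 := by
  conv_rhs => rw [ddist, ENat.iInf₂_add]
  exact le_iInf₂ fun n h => (ddist_le_of_reachIn (h.snoc he)).trans (by push_cast; rfl)

theorem ddist_insert_eq_of_le [DecidableEq α] {a u v : α}
    (huv : ddist E a v ≤ ddist E a u + 1) (b : α) :
    ddist (insert (u, v) E) a b = ddist E a b := by
  refine le_antisymm (ddist_anti (Finset.subset_insert _ _) a b) ?_
  have hpot : ∀ x y, (x, y) ∈ insert (u, v) E → ddist E a y ≤ ddist E a x + 1 := by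
    simp only [Finset.mem_insert, Prod.mk.injEq]
    rintro x y (⟨rfl, rfl⟩ | he)
    exacts [huv, ddist_le_ddist_add_one_of_mem a he]
  simpa using le_add_ddist_of_forall_mem_le_add_one hpot a b

end

theorem allowed_edge_preserves_distance_general (E' : Finset (V × V)) (a b u v : V) (k : ℕ)
    (hdist : ddist E' a b = (k : ℕ∞))
    (huv : ddist E' a v ≤ ddist E' a u + 1) :
    ddist (insert (u, v) E') a b = (k : ℕ∞) :=
  (ddist_insert_eq_of_le huv b).trans hdist

/-- If every vertex lies on a shortest `a`-`b` path and `d(a,u) ≥ d(a,v) - 1`, then adding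
the edge `(u,v)` preserves the distance from `a` to `b`. -/
theorem allowed_edge_preserves_distance (E' : Finset (V × V)) (a b u v : V) (k : ℕ)
    (hdist : ddist E' a b = (k : ℕ∞))
    (hgeo : ∀ w : V, ddist E' a w + ddist E' w b = (k : ℕ∞))
    (hne : u ≠ v)
    (huv : ddist E' a v ≤ ddist E' a u + 1) :
    ddist (insert (u, v) E') a b = (k : ℕ∞) :=
  allowed_edge_preserves_distance_general E' a b u v k hdist huv
end
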